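/- If C is a rational curve properly parametrized by ψ with coefficients in K(α), σ is a K-automorphism of the algebraic closure F, and C = C^σ, then the unique fractional linear transformation u_σ with ψ = ψ^σ ∘ u_σ satisfies: for all but finitely many parameters t₀ ∈ F, the value s₀ = u_σ(t₀) is the unique solution of the system ψ^σ(s) = ψ(t₀). Conversely, if C ≠ C^σ, then for all but finitely many t₀ the system ψ^σ(s) = ψ(t₀) has no solution s ∈ F. -/

import Mathlib

/-!
Evaluation at `t` is an `F`-algebra homomorphism on the rational functions without a pole at
`t`. Hence `ψ(t) = ψ^σ(u(t))` wherever `u` is regular at `t` and `ψ^σ` is defined at `u(t)`,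
which excludes only finitely many `t` because a nonconstant `u` has finite fibres. Conjugation
by `σ` preserves generic injectivity, so outside finitely many more `t` the point `ψ(t)` has no
other preimage under `ψ^σ`.

Conversely, if `ψ(t)` lies on the image of `ψ^σ` for infinitely many `t`, generic injectivity
of `ψ` provides infinitely many distinct preimages `s`. A polynomial vanishing on either image
then pulls back to a rational function with infinitely many zeros, hence vanishes on the other
image as well, and the two Zariski closures coincide.
-/

open Polynomial

noncomputable section

/-- The Zariski closure of a subset of affine `m`-space over `F`. -/
def zariskiClosure {F : Type*} [Field F] {m : ℕ} (S : Set (Fin m → F)) :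
    Set (Fin m → F) :=
  {x | ∀ p : MvPolynomial (Fin m) F,
    (∀ s ∈ S, MvPolynomial.eval s p = 0) → MvPolynomial.eval x p = 0}

/-- A tuple of rational functions is defined at `t` if no denominator vanishes. -/
def definedAt {F : Type*} [Field F] {m : ℕ} (ψ : Fin m → RatFunc F) (t : F) : Prop :=
  ∀ i, (ψ i).denom.eval t ≠ 0

/-- The value of a tuple of rational functions at a parameter `t`. -/
def evalParam {F : Type*} [Field F] {m : ℕ} (ψ : Fin m → RatFunc F) (t : F) :
    Fin m → F :=
  fun i => (ψ i).num.eval t / (ψ i).denom.eval t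

/-- The affine image of a tuple of rational functions. -/
def paramImage {F : Type*} [Field F] {m : ℕ} (ψ : Fin m → RatFunc F) :
    Set (Fin m → F) :=
  {x | ∃ t : F, definedAt ψ t ∧ x = evalParam ψ t}

/-- Properness (generic injectivity, equivalent to birationality in characteristic
zero): only finitely many pairs of distinct parameters give the same point. -/
def GenericallyInjective {F : Type*} [Field F] {m : ℕ} (ψ : Fin m → RatFunc F) : Prop :=
  Set.Finite {p : F × F | p.1 ≠ p.2 ∧ definedAt ψ p.1 ∧ definedAt ψ p.2 ∧
    evalParam ψ p.1 = evalParam ψ p.2}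

/-- The coefficientwise conjugate of a rational function under a field
homomorphism `σ`. -/
def conjRatFunc {F : Type*} [Field F] (σ : F →+* F) (r : RatFunc F) : RatFunc F :=
  algebraMap F[X] (RatFunc F) (r.num.map σ) / algebraMap F[X] (RatFunc F) (r.denom.map σ)

/-- A rational function is a Möbius (fractional linear) transformation if it equals
`(at+b)/(ct+d)` with `ad - bc ≠ 0`. -/
def IsMobius {F : Type*} [Field F] (u : RatFunc F) : Prop :=
  ∃ a b c d : F, a * d - b * c ≠ 0 ∧
    u = algebraMap F[X] (RatFunc F) (C a * X + C b) /
        algebraMap F[X] (RatFunc F) (C c * X + C d)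

/-- Composition `χ ∘ u` of rational functions, by evaluation of `χ` at `u`. -/
def compRatFunc {F : Type*} [Field F] (χ u : RatFunc F) : RatFunc F :=
  RatFunc.eval (algebraMap F (RatFunc F)) u χ

end

namespace RatFunc

variable {F : Type*} [Field F]

lemma eval_id (t : F) (r : RatFunc F) :
    eval (RingHom.id F) t r = r.num.eval t / r.denom.eval t :=
  rfl

lemma num_denom_div_of_isCoprime {p q : F[X]} (hq : q.Monic) (hpq : IsCoprime p q) :
    (algebraMap F[X] (RatFunc F) p / algebraMap F[X] (RatFunc F) q).num = p ∧
      (algebraMap F[X] (RatFunc F) p / algebraMap F[X] (RatFunc F) q).denom = q := by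
  set r := algebraMap F[X] (RatFunc F) p / algebraMap F[X] (RatFunc F) q
  have hcross : r.num * q = p * r.denom := (num_mul_eq_mul_denom_iff hq.ne_zero).2 rfl
  have hdenom : r.denom = q := by
    refine eq_of_monic_of_associated (monic_denom r) hq
      (associated_of_dvd_dvd (denom_div_dvd p q) ?_)
    exact hpq.symm.dvd_of_dvd_mul_left ⟨r.num, by rw [← hcross, mul_comm]⟩
  rw [hdenom] at hcross
  exact ⟨mul_right_cancel₀ hq.ne_zero hcross, hdenom⟩

lemma denom_eval_ne_zero_of_dvd {t : F} {r : RatFunc F} {q : F[X]} (hr : r.denom ∣ q)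
    (hq : q.eval t ≠ 0) : r.denom.eval t ≠ 0 :=
  mt (eval_eq_zero_of_dvd_of_eval_eq_zero hr) hq

/-- The local ring of the affine line at `t`. -/
def regularAt (t : F) : Subalgebra F (RatFunc F) where
  carrier := {r | r.denom.eval t ≠ 0}
  mul_mem' {r s} hr hs := denom_eval_ne_zero_of_dvd (denom_mul_dvd r s)
    (by rw [Polynomial.eval_mul]; exact mul_ne_zero hr hs)
  add_mem' {r s} hr hs := denom_eval_ne_zero_of_dvd (denom_add_dvd r s)
    (by rw [Polynomial.eval_mul]; exact mul_ne_zero hr hs)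
  algebraMap_mem' a := by simp [algebraMap_eq_C]

noncomputable def evalAt (t : F) : regularAt t →ₐ[F] F where
  toFun r := eval (RingHom.id F) t r
  map_one' := eval_one _ _
  map_mul' r s := eval_mul _ _ r.2 s.2
  map_zero' := eval_zero _ _
  map_add' r s := eval_add _ _ r.2 s.2
  commutes' a := by simp [algebraMap_eq_C]

lemma evalAt_apply (t : F) (r : regularAt t) : evalAt t r = eval (RingHom.id F) t r :=
  rfl

lemma inv_mem_regularAt {t : F} {r : RatFunc F} (hr : r ∈ regularAt t)
    (h : eval (RingHom.id F) t r ≠ 0) : r⁻¹ ∈ regularAt t := by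
  have hr0 : r ≠ 0 := by rintro rfl; simp at h
  exact denom_eval_ne_zero_of_dvd (denom_inv_dvd hr0) (div_ne_zero_iff.1 h).1

lemma eval_inv {t : F} {r : RatFunc F} (hr : r ∈ regularAt t)
    (h : eval (RingHom.id F) t r ≠ 0) :
    eval (RingHom.id F) t r⁻¹ = (eval (RingHom.id F) t r)⁻¹ := by
  have hr0 : r ≠ 0 := by rintro rfl; simp at h
  have := map_mul (evalAt t) ⟨r, hr⟩ ⟨r⁻¹, inv_mem_regularAt hr h⟩
  simp only [MulMemClass.mk_mul_mk, mul_inv_cancel₀ hr0, evalAt_apply, eval_one] at this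
  exact eq_inv_of_mul_eq_one_right this.symm

lemma aeval_mem_regularAt_and_eval {σ : Type*} {t : F} {ψ : σ → RatFunc F}
    (hψ : ∀ i, ψ i ∈ regularAt t) (p : MvPolynomial σ F) :
    MvPolynomial.aeval ψ p ∈ regularAt t ∧
      eval (RingHom.id F) t (MvPolynomial.aeval ψ p)
        = MvPolynomial.eval (fun i => eval (RingHom.id F) t (ψ i)) p := by
  have h := MvPolynomial.comp_aeval_apply (regularAt t).val (f := fun i => ⟨ψ i, hψ i⟩) p
  have h' := MvPolynomial.comp_aeval_apply (evalAt t) (f := fun i => ⟨ψ i, hψ i⟩) p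
  simp only [Subalgebra.coe_val] at h
  refine ⟨h ▸ SetLike.coe_mem _, ?_⟩
  rw [← h, ← evalAt_apply, h']
  rfl

lemma polynomial_aeval_mem_regularAt_and_eval {t : F} {u : RatFunc F} (hu : u ∈ regularAt t)
    (p : F[X]) :
    Polynomial.aeval u p ∈ regularAt t ∧
      eval (RingHom.id F) t (Polynomial.aeval u p) = p.eval (eval (RingHom.id F) t u) := by
  have h := Polynomial.aeval_algHom_apply (regularAt t).val (⟨u, hu⟩ : regularAt t) p
  have h' := Polynomial.aeval_algHom_apply (evalAt t) (⟨u, hu⟩ : regularAt t) p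
  simp only [Subalgebra.coe_val] at h
  refine ⟨h ▸ SetLike.coe_mem _, ?_⟩
  rw [h, ← evalAt_apply, ← h', Polynomial.coe_aeval_eq_eval]
  rfl

lemma compRatFunc_mem_regularAt_and_eval {t : F} {χ u : RatFunc F} (hu : u ∈ regularAt t)
    (hχ : χ ∈ regularAt (eval (RingHom.id F) t u)) :
    compRatFunc χ u ∈ regularAt t ∧
      eval (RingHom.id F) t (compRatFunc χ u) =
        eval (RingHom.id F) (eval (RingHom.id F) t u) χ := by
  obtain ⟨hN, hNval⟩ := polynomial_aeval_mem_regularAt_and_eval hu χ.num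
  obtain ⟨hD, hDval⟩ := polynomial_aeval_mem_regularAt_and_eval hu χ.denom
  have hD0 : eval (RingHom.id F) t (Polynomial.aeval u χ.denom) ≠ 0 := hDval ▸ hχ
  have hcomp : compRatFunc χ u = Polynomial.aeval u χ.num * (Polynomial.aeval u χ.denom)⁻¹ :=
    div_eq_mul_inv _ _
  have hDinv := inv_mem_regularAt hD hD0
  refine ⟨hcomp ▸ mul_mem hN hDinv, ?_⟩
  rw [hcomp, eval_mul _ _ hN hDinv, eval_inv hD hD0, hNval, hDval]
  exact (div_eq_mul_inv _ _).symm

lemma eq_zero_of_infinite_setOf_eval_eq_zero {r : RatFunc F}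
    (h : {t | r ∈ regularAt t ∧ eval (RingHom.id F) t r = 0}.Infinite) : r = 0 := by
  by_contra hr
  refine h ((Polynomial.finite_setOfPred_isRoot (num_ne_zero hr)).subset ?_)
  rintro t ⟨hreg, h0⟩
  exact (div_eq_zero_iff.1 h0).resolve_right hreg

lemma finite_setOf_eval_eq_of_notMem_range {u : RatFunc F}
    (hu : u ∉ Set.range (algebraMap F (RatFunc F))) (e : F) :
    {t | u ∈ regularAt t ∧ eval (RingHom.id F) t u = e}.Finite := by
  have hne : u.num - Polynomial.C e * u.denom ≠ 0 := by
    refine fun h0 => hu ⟨e, ?_⟩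
    rw [← num_div_denom u, sub_eq_zero.1 h0, map_mul, mul_div_assoc,
      div_self (algebraMap_ne_zero (denom_ne_zero u)), mul_one, algebraMap_C, algebraMap_eq_C]
  refine (Polynomial.finite_setOfPred_isRoot hne).subset ?_
  rintro t ⟨hreg, he⟩
  rw [eval_id, div_eq_iff hreg] at he
  simp [he]

lemma finite_setOf_eval_mem_of_notMem_range {u : RatFunc F}
    (hu : u ∉ Set.range (algebraMap F (RatFunc F))) {A : Set F} (hA : A.Finite) :
    {t | u ∈ regularAt t ∧ eval (RingHom.id F) t u ∈ A}.Finite := by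
  refine (hA.biUnion fun e _ => finite_setOf_eval_eq_of_notMem_range hu e).subset ?_
  rintro t ⟨hreg, hA⟩
  exact Set.mem_biUnion hA ⟨hreg, rfl⟩

end RatFunc

lemma IsMobius.notMem_range {F : Type*} [Field F] {u : RatFunc F} (h : IsMobius u) :
    u ∉ Set.range (algebraMap F (RatFunc F)) := by
  obtain ⟨a, b, c, d, hdet, rfl⟩ := h
  rintro ⟨k, hk⟩
  have hB : (C c * X + C d : F[X]) ≠ 0 := by
    intro h0
    have hc : c = 0 := by simpa using congrArg (coeff · 1) h0
    have hd : d = 0 := by simpa using congrArg (coeff · 0) h0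
    exact hdet (by simp [hc, hd])
  rw [RatFunc.algebraMap_eq_C, ← RatFunc.algebraMap_C, eq_div_iff (RatFunc.algebraMap_ne_zero hB),
    ← map_mul] at hk
  have hk' := RatFunc.algebraMap_injective F hk
  have ha : k * c = a := by simpa using congrArg (coeff · 1) hk'
  have hb : k * d = b := by simpa using congrArg (coeff · 0) hk'
  exact hdet (by rw [← ha, ← hb]; ring)

section Conjugation

variable {F : Type*} [Field F] {m : ℕ}

lemma num_denom_conjRatFunc (σ : F →+* F) (r : RatFunc F) :
    (conjRatFunc σ r).num = r.num.map σ ∧ (conjRatFunc σ r).denom = r.denom.map σ :=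
  RatFunc.num_denom_div_of_isCoprime ((RatFunc.monic_denom r).map σ)
    (by simpa using (RatFunc.isCoprime_num_denom r).map (mapRingHom σ))

lemma definedAt_conj_iff (σ : F →+* F) (ψ : Fin m → RatFunc F) (x : F) :
    definedAt (fun i => conjRatFunc σ (ψ i)) (σ x) ↔ definedAt ψ x := by
  simp only [definedAt, (num_denom_conjRatFunc σ _).2, eval_map, eval₂_hom, _root_.map_ne_zero]

lemma evalParam_conj (σ : F →+* F) (ψ : Fin m → RatFunc F) (x : F) :
    evalParam (fun i => conjRatFunc σ (ψ i)) (σ x) = fun i => σ (evalParam ψ x i) := by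
  funext i
  simp only [evalParam, (num_denom_conjRatFunc σ _).1, (num_denom_conjRatFunc σ _).2, eval_map,
    eval₂_hom, map_div₀]

lemma GenericallyInjective.conj (σ : F ≃+* F) {ψ : Fin m → RatFunc F}
    (hψ : GenericallyInjective ψ) :
    GenericallyInjective (fun i => conjRatFunc (σ : F →+* F) (ψ i)) := by
  refine (hψ.image (Prod.map σ σ)).subset ?_
  rintro ⟨s, s'⟩ ⟨hne, hd, hd', heq⟩
  obtain ⟨x, rfl⟩ := σ.surjective s
  obtain ⟨x', rfl⟩ := σ.surjective s'
  refine ⟨(x, x'), ⟨fun h => hne (congrArg σ h), (definedAt_conj_iff _ ψ x).1 hd,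
    (definedAt_conj_iff _ ψ x').1 hd', ?_⟩, rfl⟩
  funext i
  exact σ.injective (congrFun ((evalParam_conj _ ψ x).symm.trans (heq.trans
    (evalParam_conj _ ψ x'))) i)

end Conjugation

section Parametrization

variable {F : Type*} [Field F] {m : ℕ}

open RatFunc

lemma evalParam_apply (ψ : Fin m → RatFunc F) (t : F) (i : Fin m) :
    evalParam ψ t i = eval (RingHom.id F) t (ψ i) :=
  rfl

lemma finite_setOf_not_definedAt (ψ : Fin m → RatFunc F) : {t | ¬ definedAt ψ t}.Finite := by
  refine (Set.finite_iUnion fun i => finite_setOfPred_isRoot (denom_ne_zero (ψ i))).subset ?_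
  intro t ht
  simp only [definedAt, not_forall, not_not] at ht
  exact Set.mem_iUnion.2 ht

lemma GenericallyInjective.exists_finite {ψ : Fin m → RatFunc F}
    (hψ : GenericallyInjective ψ) :
    ∃ E : Set F, E.Finite ∧
      ∀ ⦃s s' : F⦄, s ∉ E → definedAt ψ s → definedAt ψ s' →
        evalParam ψ s = evalParam ψ s' → s = s' :=
  ⟨Prod.fst '' _, hψ.image _, fun s s' hs hd hd' he =>
    by_contra fun hne => hs ⟨(s, s'), ⟨hne, hd, hd', he⟩, rfl⟩⟩

lemma eval_eq_zero_on_paramImage_of_infinite {ψ : Fin m → RatFunc F} {T : Set F}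
    (hT : T.Infinite) (hdef : ∀ t ∈ T, definedAt ψ t) {p : MvPolynomial (Fin m) F}
    (hp : ∀ t ∈ T, MvPolynomial.eval (evalParam ψ t) p = 0) :
    ∀ x ∈ paramImage ψ, MvPolynomial.eval x p = 0 := by
  have hzero : MvPolynomial.aeval ψ p = 0 := by
    refine eq_zero_of_infinite_setOf_eval_eq_zero (hT.mono fun t ht => ?_)
    obtain ⟨hreg, hval⟩ := aeval_mem_regularAt_and_eval (hdef t ht) p
    exact ⟨hreg, hval.trans (hp t ht)⟩
  rintro _ ⟨t, ht, rfl⟩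
  have h := (aeval_mem_regularAt_and_eval ht p).2
  simp only [hzero, RatFunc.eval_zero] at h
  exact h.symm

theorem zariskiClosure_paramImage_eq_of_infinite {ψ φ : Fin m → RatFunc F}
    (hψ : GenericallyInjective ψ)
    (hT : {t | definedAt ψ t ∧
      ∃ s, definedAt φ s ∧ evalParam φ s = evalParam ψ t}.Infinite) :
    zariskiClosure (paramImage ψ) = zariskiClosure (paramImage φ) := by
  set T := {t | definedAt ψ t ∧ ∃ s, definedAt φ s ∧ evalParam φ s = evalParam ψ t}
  obtain ⟨B, hB, hBinj⟩ := hψ.exists_finite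
  choose! f hfdef hfeval using fun t (ht : t ∈ T) => ht.2
  have hf : (f '' (T \ B)).Infinite := (hT.sdiff hB).image fun t ht t' ht' h =>
    hBinj ht.2 ht.1.1 ht'.1.1 (by rw [← hfeval t ht.1, h, hfeval t' ht'.1])
  suffices ∀ p, (∀ x ∈ paramImage ψ, MvPolynomial.eval x p = 0) ↔
      (∀ x ∈ paramImage φ, MvPolynomial.eval x p = 0) by
    ext x
    exact forall_congr' fun p => imp_congr_left (this p)
  refine fun p => ⟨fun hp => ?_, fun hp => ?_⟩
  · refine eval_eq_zero_on_paramImage_of_infinite hf ?_ ?_ <;> rintro _ ⟨t, ht, rfl⟩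
    · exact hfdef t ht.1
    · rw [hfeval t ht.1]
      exact hp _ ⟨t, ht.1.1, rfl⟩
  · refine eval_eq_zero_on_paramImage_of_infinite hT (fun t ht => ht.1) fun t ht => ?_
    rw [← hfeval t ht]
    exact hp _ ⟨f t, hfdef t ht, rfl⟩

theorem exists_finite_solutions_eq_singleton {ψ φ : Fin m → RatFunc F}
    (hφ : GenericallyInjective φ) {u : RatFunc F}
    (hu : u ∉ Set.range (algebraMap F (RatFunc F))) (hcomp : ∀ i, ψ i = compRatFunc (φ i) u) :
    ∃ S : Set F, S.Finite ∧ ∀ t₀ ∉ S,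
      {s | definedAt φ s ∧ evalParam φ s = evalParam ψ t₀} =
        {eval (RingHom.id F) t₀ u} := by
  obtain ⟨E, hE, hEinj⟩ := hφ.exists_finite
  refine ⟨{t | u ∉ regularAt t} ∪
      {t | u ∈ regularAt t ∧ eval (RingHom.id F) t u ∈ E ∪ {s | ¬ definedAt φ s}},
    ((finite_setOfPred_isRoot (denom_ne_zero u)).subset fun t h => not_not.1 h).union
      (finite_setOf_eval_mem_of_notMem_range hu (hE.union (finite_setOf_not_definedAt φ))),
    fun t₀ ht₀ => ?_⟩
  simp only [Set.mem_union, Set.mem_ofPred_eq, not_or, not_and, not_not] at ht₀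
  obtain ⟨hreg, hgood⟩ := ht₀
  obtain ⟨hE₀, hdef⟩ := hgood hreg
  have hsol : evalParam φ (eval (RingHom.id F) t₀ u) = evalParam ψ t₀ := by
    funext i
    rw [evalParam_apply, evalParam_apply, hcomp i,
      (compRatFunc_mem_regularAt_and_eval hreg (hdef i)).2]
  ext s
  exact ⟨fun ⟨hs, hval⟩ => (hEinj hE₀ hdef hs (hsol.trans hval.symm)).symm,
    fun hs => hs ▸ ⟨hdef, hsol⟩⟩

end Parametrization

open IntermediateField in
theorem reparametrization_solutions_general {K F : Type*} [Field K] [Field F] [Algebra K F] {m : ℕ}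
    (σ : F ≃ₐ[K] F) (ψ : Fin m → RatFunc F) (hψ : GenericallyInjective ψ) :
    letI ψσ : Fin m → RatFunc F := fun i => conjRatFunc (σ : F →+* F) (ψ i)
    ((zariskiClosure (paramImage ψ) = zariskiClosure (paramImage ψσ) →
      ∀ u : RatFunc F, IsMobius u → (∀ i, ψ i = compRatFunc (ψσ i) u) →
        ∃ S : Set F, S.Finite ∧ ∀ t₀ ∉ S,
          {s : F | definedAt ψσ s ∧ evalParam ψσ s = evalParam ψ t₀}
            = {RatFunc.eval (RingHom.id F) t₀ u}) ∧
     (zariskiClosure (paramImage ψ) ≠ zariskiClosure (paramImage ψσ) →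
      ∃ S : Set F, S.Finite ∧ ∀ t₀ ∉ S,
        ¬ ∃ s : F, definedAt ψσ s ∧ evalParam ψσ s = evalParam ψ t₀)) := by
  refine ⟨fun _ u hu hcomp =>
    exists_finite_solutions_eq_singleton (hψ.conj σ.toRingEquiv) hu.notMem_range hcomp,
    fun hne => ?_⟩
  have hfin := Set.not_infinite.1 (mt (zariskiClosure_paramImage_eq_of_infinite hψ) hne)
  refine ⟨_ ∪ {t | ¬ definedAt ψ t}, hfin.union (finite_setOf_not_definedAt ψ),
    fun t₀ ht₀ hsol => ht₀ ((em (definedAt ψ t₀)).imp (fun hdef => ⟨hdef, hsol⟩) id)⟩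

open IntermediateField in
/-- If `C = C^σ`, then for all but finitely many `t₀` the value `u_σ(t₀)` of the
reparametrizing Möbius transformation is the unique solution of `ψ^σ(s) = ψ(t₀)`;
if `C ≠ C^σ`, then for all but finitely many `t₀` this system has no solution. -/
theorem reparametrization_solutions {K F : Type*} [Field K] [Field F] [IsAlgClosed F]
    [CharZero F] [Algebra K F] {m : ℕ} (α : F) (σ : F ≃ₐ[K] F)
    (ψ : Fin m → RatFunc F) (hψ : GenericallyInjective ψ)
    (hcoeff : ∀ i k, (ψ i).num.coeff k ∈ K⟮α⟯ ∧ (ψ i).denom.coeff k ∈ K⟮α⟯) :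
    letI ψσ : Fin m → RatFunc F := fun i => conjRatFunc (σ : F →+* F) (ψ i)
    ((zariskiClosure (paramImage ψ) = zariskiClosure (paramImage ψσ) →
      ∀ u : RatFunc F, IsMobius u → (∀ i, ψ i = compRatFunc (ψσ i) u) →
        ∃ S : Set F, S.Finite ∧ ∀ t₀ ∉ S,
          {s : F | definedAt ψσ s ∧ evalParam ψσ s = evalParam ψ t₀}
            = {RatFunc.eval (RingHom.id F) t₀ u}) ∧
     (zariskiClosure (paramImage ψ) ≠ zariskiClosure (paramImage ψσ) →
      ∃ S : Set F, S.Finite ∧ ∀ t₀ ∉ S,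
        ¬ ∃ s : F, definedAt ψσ s ∧ evalParam ψσ s = evalParam ψ t₀)) :=
  reparametrization_solutions_general σ ψ hψ
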